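/- arXiv:2204.03068 — 3 statements merged into one kernel-verified Lean document; each statement's English description precedes it below -/
import Mathlib

section
/- The n-iterate Cantor set C_n(L,M,A) based in [0,L] is ν-porous on scales L·M^{-n+1} to ∞ for any ν ≤ M^{-2}. That is, for every interval I of length r with L·M^{-n+1} ≤ r, there exists a subinterval J ⊆ I of length ν·r whose intersection with C_n(L,M,A) has measure zero. -/
open MeasureTheory
open scoped ENNReal

/-- The discrete Cantor set `C_n^(d)(M, A) = { Σ_{j<n} a_j M^j : a_j ∈ A }`. -/
def discreteCantor (M : ℕ) (A : Finset ℕ) (n : ℕ) : Set ℕ :=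
  {k | ∃ a : Fin n → ℕ, (∀ j, a j ∈ A) ∧ k = ∑ j, a j * M ^ (j : ℕ)}

/-- The continuous `n`-iterate Cantor set based in `[0, L]`. -/
noncomputable def cantorIter (L : ℝ) (M : ℕ) (A : Finset ℕ) (n : ℕ) : Set ℝ :=
  ⋃ c ∈ discreteCantor M A n,
    Set.Icc (L / (M : ℝ) ^ n * (c : ℝ)) (L / (M : ℝ) ^ n * ((c : ℝ) + 1))

lemma sum_digits_lt (M : ℕ) (hM : 0 < M) (a : ℕ → ℕ) (ha : ∀ j, a j < M) (k : ℕ) :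
    ∑ j ∈ Finset.range k, a j * M ^ j < M ^ k := by
  induction k with
  | zero => simpa using Nat.one_pos
  | succ k ih =>
    rw [Finset.sum_range_succ, pow_succ]
    have h1 : a k + 1 ≤ M := ha k
    calc ∑ j ∈ Finset.range k, a j * M ^ j + a k * M ^ k
        < M ^ k + a k * M ^ k := by omega
      _ = (a k + 1) * M ^ k := by ring
      _ ≤ M * M ^ k := Nat.mul_le_mul_right _ h1
      _ = M ^ k * M := by ring

lemma discreteCantor_lt {M : ℕ} (hM : 0 < M) {A : Finset ℕ} (hAsub : A ⊆ Finset.range M)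
    {n c : ℕ} (hc : c ∈ discreteCantor M A n) : c < M ^ n := by
  obtain ⟨a, haA, rfl⟩ := hc
  set a' : ℕ → ℕ := fun j => if h : j < n then a ⟨j, h⟩ else 0 with ha'
  have ha'M : ∀ j, a' j < M := by
    intro j
    by_cases h : j < n
    · simpa [a', h] using Finset.mem_range.1 (hAsub (haA ⟨j, h⟩))
    · simpa [a', h] using hM
  have hsum : ∑ j : Fin n, a j * M ^ (j:ℕ) = ∑ j ∈ Finset.range n, a' j * M ^ j := by
    rw [← Fin.sum_univ_eq_sum_range]
    exact Finset.sum_congr rfl fun j _ => by simp [a', j.isLt]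
  rw [hsum]
  exact sum_digits_lt M hM a' ha'M n

lemma cantor_digit {M : ℕ} (hM : 0 < M) {A : Finset ℕ} (hAsub : A ⊆ Finset.range M)
    {n c : ℕ} (hc : c ∈ discreteCantor M A n) {k : ℕ} (hk : k < n) :
    ∃ q : ℕ, q % M ∈ A ∧ M ^ k * q ≤ c ∧ c + 1 ≤ M ^ k * (q + 1) := by
  obtain ⟨a, haA, rfl⟩ := hc
  set a' : ℕ → ℕ := fun j => if h : j < n then a ⟨j, h⟩ else 0 with ha'
  have ha'A : ∀ j, j < n → a' j ∈ A := fun j h => by simpa [a', h] using haA ⟨j, h⟩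
  have ha'M : ∀ j, a' j < M := by
    intro j
    by_cases h : j < n
    · simpa [a', h] using Finset.mem_range.1 (hAsub (haA ⟨j, h⟩))
    · simpa [a', h] using hM
  have hsum : ∑ j : Fin n, a j * M ^ (j:ℕ) = ∑ j ∈ Finset.range n, a' j * M ^ j := by
    rw [← Fin.sum_univ_eq_sum_range]
    exact Finset.sum_congr rfl fun j _ => by simp [a', j.isLt]
  set q : ℕ := a' k + M * ∑ j ∈ Finset.range (n - k - 1), a' (k + 1 + j) * M ^ j with hqdef
  have hlo : ∑ j ∈ Finset.range k, a' j * M ^ j < M ^ k := sum_digits_lt M hM a' ha'M k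
  have hdecomp : ∑ j : Fin n, a j * M ^ (j:ℕ)
      = ∑ j ∈ Finset.range k, a' j * M ^ j + M ^ k * q := by
    rw [hsum, ← Finset.sum_range_add_sum_Ico _ (le_of_lt hk)]
    congr 1
    rw [Finset.sum_Ico_eq_sum_range]
    have hnk : n - k = (n - k - 1) + 1 := by omega
    rw [hnk, Finset.sum_range_succ']
    have hterm : ∀ j, a' (k + (j + 1)) * M ^ (k + (j + 1))
        = M ^ k * (M * (a' (k + 1 + j) * M ^ j)) := by
      intro j
      rw [show k + (j + 1) = (k + 1) + j by omega, pow_add, pow_succ]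
      ring
    simp only [hterm, add_zero, pow_zero, mul_one]
    rw [← Finset.mul_sum, ← Finset.mul_sum, hqdef]
    ring
  have hexp : M ^ k * (q + 1) = M ^ k * q + M ^ k := by ring
  refine ⟨q, ?_, ?_, ?_⟩
  · rw [hqdef, Nat.add_mul_mod_self_left, Nat.mod_eq_of_lt (ha'M k)]
    exact ha'A k hk
  · omega
  · omega

lemma cantorIter_subset {M : ℕ} (hM : 0 < M) {A : Finset ℕ} (hAsub : A ⊆ Finset.range M)
    {L : ℝ} (hL : 0 < L) {n : ℕ} : cantorIter L M A n ⊆ Set.Icc 0 L := by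
  intro z hz
  simp only [cantorIter, Set.mem_iUnion, Set.mem_Icc] at hz
  obtain ⟨c, hc, hz1, hz2⟩ := hz
  have hMpow : (0:ℝ) < (M:ℝ) ^ n := by positivity
  have hδ : 0 < L / (M:ℝ) ^ n := by positivity
  have hclt : ((c:ℝ) + 1) ≤ (M:ℝ) ^ n := by
    have := discreteCantor_lt hM hAsub hc
    exact_mod_cast Nat.succ_le_of_lt this
  constructor
  · have : (0:ℝ) ≤ L / (M:ℝ) ^ n * c := by positivity
    linarith
  · have : L / (M:ℝ) ^ n * ((c:ℝ) + 1) ≤ L / (M:ℝ) ^ n * (M:ℝ) ^ n :=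
      mul_le_mul_of_nonneg_left hclt (le_of_lt hδ)
    rw [div_mul_cancel₀ _ (ne_of_gt hMpow)] at this
    linarith

lemma gap_null {M : ℕ} (hM : 0 < M) {A : Finset ℕ} (hAsub : A ⊆ Finset.range M)
    {b : ℕ} (hbA : b ∉ A) {L : ℝ} (hL : 0 < L) {n k : ℕ} (hk : k < n)
    (q : ℤ) (hq : q % (M:ℤ) = (b:ℤ)) :
    volume (cantorIter L M A n ∩
      Set.Icc (L / (M:ℝ)^n * (M:ℝ)^k * (q:ℝ)) (L / (M:ℝ)^n * (M:ℝ)^k * ((q:ℝ)+1))) = 0 := by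
  rw [cantorIter, Set.iUnion₂_inter]
  rw [measure_biUnion_null_iff (Set.to_countable _)]
  intro c hc
  obtain ⟨qc, hqcA, h1, h2⟩ := cantor_digit hM hAsub hc hk
  have hqne : (qc:ℤ) ≠ q := by
    intro he
    apply hbA
    have : ((qc % M : ℕ) : ℤ) = (b:ℤ) := by
      push_cast
      rw [he, hq]
    have h3 : qc % M = b := by exact_mod_cast this
    rwa [h3] at hqcA
  set δ := L / (M:ℝ) ^ n with hδdef
  have hδ0 : 0 < δ := by positivity
  have hMk : (0:ℝ) < (M:ℝ) ^ k := by positivity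
  rw [Set.Icc_inter_Icc, Real.volume_Icc]
  rw [ENNReal.ofReal_eq_zero]
  have hc1 : (M:ℝ) ^ k * (qc:ℝ) ≤ (c:ℝ) := by exact_mod_cast h1
  have hc2 : (c:ℝ) + 1 ≤ (M:ℝ) ^ k * ((qc:ℝ) + 1) := by exact_mod_cast h2
  rcases lt_or_gt_of_ne hqne with h | h
  · -- qc < q : qc + 1 ≤ q, so δ*(c+1) ≤ δ*M^k*q
    have hle : (qc:ℝ) + 1 ≤ (q:ℝ) := by exact_mod_cast h
    have : δ * ((c:ℝ) + 1) ≤ δ * (M:ℝ)^k * (q:ℝ) := by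
      have ha := mul_le_mul_of_nonneg_left hc2 hδ0.le
      have hb := mul_le_mul_of_nonneg_left hle (mul_nonneg hδ0.le hMk.le)
      nlinarith [ha, hb]
    have hmm : min (δ * ((c:ℝ)+1)) (δ * (M:ℝ)^k * ((q:ℝ)+1)) ≤ max (δ * (c:ℝ)) (δ * (M:ℝ)^k * (q:ℝ)) :=
      le_trans (min_le_left _ _) (le_trans this (le_max_right _ _))
    simpa using sub_nonpos.2 hmm
  · -- q < qc : q + 1 ≤ qc, so δ*M^k*(q+1) ≤ δ*c
    have hle : (q:ℝ) + 1 ≤ (qc:ℝ) := by exact_mod_cast h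
    have : δ * (M:ℝ)^k * ((q:ℝ)+1) ≤ δ * (c:ℝ) := by
      have ha := mul_le_mul_of_nonneg_left hc1 hδ0.le
      have hb := mul_le_mul_of_nonneg_left hle (mul_nonneg hδ0.le hMk.le)
      nlinarith [ha, hb]
    have hmm : min (δ * ((c:ℝ)+1)) (δ * (M:ℝ)^k * ((q:ℝ)+1)) ≤ max (δ * (c:ℝ)) (δ * (M:ℝ)^k * (q:ℝ)) :=
      le_trans (min_le_right _ _) (le_trans this (le_max_left _ _))
    simpa using sub_nonpos.2 hmm

set_option maxHeartbeats 1000000 in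
/-- The `n`-iterate Cantor set `C_n(L,M,A)` based in `[0,L]` is `ν`-porous on scales
`L·M^{-n+1}` to `∞` for any `ν ≤ M^{-2}`: for every interval `I = [x, x+r]` of length
`r ≥ L·M^{-n+1}` there is a subinterval `J ⊆ I` of length `ν·r` meeting `C_n(L,M,A)` in a
set of Lebesgue measure zero. -/
theorem cantorIter_porous (M : ℕ) (hM : 1 < M) (A : Finset ℕ) (hA : A.Nonempty)
    (hAsub : A ⊆ Finset.range M) (hAprop : A ≠ Finset.range M)
    (L : ℝ) (hL : 0 < L) (n : ℕ) (ν : ℝ) (hν : 0 < ν) (hνM : ν ≤ ((M : ℝ)) ^ (-2 : ℤ)) :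
    ∀ x r : ℝ, L * (M : ℝ) ^ (1 - (n : ℤ)) ≤ r →
      ∃ y : ℝ, Set.Icc y (y + ν * r) ⊆ Set.Icc x (x + r) ∧
        volume (cantorIter L M A n ∩ Set.Icc y (y + ν * r)) = 0 := by
  classical
  intro x r hr
  have hM0 : 0 < M := by omega
  have hMR : (1:ℝ) < (M:ℝ) := by exact_mod_cast hM
  have hM2 : (2:ℝ) ≤ (M:ℝ) := by exact_mod_cast hM
  have hMne : (M:ℝ) ≠ 0 := by positivity
  set δ := L / (M:ℝ) ^ n with hδdef
  have hδ0 : 0 < δ := by positivity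
  -- rewrite the scale hypothesis
  have hr' : δ * (M:ℝ) ≤ r := by
    have hcast : (M:ℝ) ^ ((1:ℤ) - (n:ℤ)) = (M:ℝ) / (M:ℝ) ^ n := by
      rw [zpow_sub₀ hMne, zpow_one, zpow_natCast]
    rw [hcast] at hr
    calc δ * (M:ℝ) = L * ((M:ℝ) / (M:ℝ)^n) := by rw [hδdef]; ring
      _ ≤ r := hr
  have hr0 : 0 < r := lt_of_lt_of_le (by positivity) hr'
  -- ν bounds
  have hν2 : ν * (M:ℝ)^2 ≤ 1 := by
    have hcast : (M:ℝ) ^ (-2 : ℤ) = ((M:ℝ)^2)⁻¹ := by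
      rw [zpow_neg]; norm_cast
    rw [hcast] at hνM
    have hM2pos : (0:ℝ) < (M:ℝ)^2 := by positivity
    calc ν * (M:ℝ)^2 ≤ ((M:ℝ)^2)⁻¹ * (M:ℝ)^2 := by
          exact mul_le_mul_of_nonneg_right hνM hM2pos.le
      _ = 1 := inv_mul_cancel₀ (ne_of_gt hM2pos)
  have hν1 : ν ≤ 1 := by nlinarith
  have hνrr : ν * r ≤ r := by nlinarith
  have hνr2 : ν * r * (M:ℝ)^2 ≤ r := by nlinarith
  -- missing digit
  obtain ⟨b, hbM, hbA⟩ : ∃ b, b < M ∧ b ∉ A := by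
    by_contra h
    push_neg at h
    exact hAprop (Finset.Subset.antisymm hAsub
      (fun z hz => h z (Finset.mem_range.1 hz)))
  have hsub := cantorIter_subset (L := L) (n := n) hM0 hAsub hL
  by_cases h1 : L + ν * r ≤ x + r
  · -- escape to the right of L
    refine ⟨max x L, ?_, ?_⟩
    · refine Set.Icc_subset_Icc (le_max_left _ _) ?_
      rw [← max_add_add_right]
      exact max_le (by linarith) h1
    · refine measure_mono_null (fun z hz => ?_) (measure_singleton (L:ℝ))
      obtain ⟨hz1, hz2⟩ := hz
      have hzL : z ≤ L := (hsub hz1).2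
      have : L ≤ z := le_trans (le_max_right x L) hz2.1
      simp [le_antisymm hzL this]
  by_cases h2 : x + ν * r ≤ 0
  · -- escape to the left of 0
    refine ⟨x, Set.Icc_subset_Icc le_rfl (by linarith), ?_⟩
    refine measure_mono_null (fun z hz => ?_) (measure_singleton (0:ℝ))
    obtain ⟨hz1, hz2⟩ := hz
    have hz0 : 0 ≤ z := (hsub hz1).1
    have : z ≤ 0 := le_trans hz2.2 h2
    simp [le_antisymm this hz0]
  push_neg at h1 h2
  -- middle case: digit argument
  have hrM : r < δ * (M:ℝ)^(n+1) := by
    by_contra hcon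
    push_neg at hcon
    have hLM : δ * (M:ℝ)^(n+1) = L * M := by
      rw [hδdef, pow_succ]
      field_simp
    rw [hLM] at hcon
    have e1 : r * (M:ℝ)^2 < (L + 2*(ν*r)) * (M:ℝ)^2 :=
      mul_lt_mul_of_pos_right (by linarith) (by positivity)
    have e2 : L * (M:ℝ) * (M:ℝ) ≤ r * (M:ℝ) :=
      mul_le_mul_of_nonneg_right hcon (by positivity)
    have e3 : 0 ≤ r * (((M:ℝ)-2) * ((M:ℝ)+1)) :=
      mul_nonneg hr0.le (mul_nonneg (by linarith) (by linarith))
    nlinarith [e1, e2, e3, hνr2]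
  set P : ℕ → Prop := fun j => δ * (M:ℝ)^(j+1) ≤ r with hPdef
  set k := Nat.findGreatest P n with hkdef
  have hP0 : P 0 := by simpa [P] using hr'
  have hkP : P k := Nat.findGreatest_spec (Nat.zero_le n) hP0
  have hkn' : k ≤ n := Nat.findGreatest_le n
  have hkn : k < n := by
    rcases lt_or_eq_of_le hkn' with h | h
    · exact h
    · exfalso
      have := hkP
      rw [h] at this
      simp only [P] at this
      linarith
  have hk2 : r < δ * (M:ℝ)^(k+2) := by
    by_contra hcon
    push_neg at hcon
    have : ¬ P (k+1) := Nat.findGreatest_is_greatest (Nat.lt_succ_self k) (by omega)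
    simp only [P] at this
    push_neg at this
    linarith
  set u := δ * (M:ℝ)^k with hudef
  have hu0 : 0 < u := by positivity
  set w := δ * (M:ℝ)^(k+1) with hwdef
  have hw0 : 0 < w := by positivity
  have huw : u * M = w := by rw [hudef, hwdef, pow_succ]; ring
  have hwr : w ≤ r := hkP
  have hrw : r < w * M := by
    have : δ * (M:ℝ)^(k+2) = w * M := by rw [hwdef, pow_succ]; ring
    linarith [hk2, this.symm.le]
  have hνu : ν * r < u := by nlinarith [hνr2, hrw, huw, hu0, hM2]
  set m₀ : ℤ := ⌈(x - u * b) / w⌉ with hm₀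
  set p : ℝ := u * b + w * m₀ with hpdef
  have hp1 : x ≤ p := by
    have h := Int.le_ceil ((x - u * b) / w)
    rw [← hm₀] at h
    have := (div_le_iff₀ hw0).1 h
    rw [hpdef]; linarith [this]
  have hp2 : p < x + w := by
    have h := Int.ceil_lt_add_one ((x - u * b) / w)
    rw [← hm₀] at h
    have h2 : w * (m₀:ℝ) < w * ((x - u * b) / w + 1) := by
      exact mul_lt_mul_of_pos_left h hw0
    rw [mul_add, mul_div_cancel₀ _ (ne_of_gt hw0), mul_one] at h2
    rw [hpdef]; linarith
  by_cases hcase : p + ν * r ≤ x + r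
  · -- use gap starting at p
    set q : ℤ := (M:ℤ) * m₀ + b with hqdef
    have hq : q % (M:ℤ) = (b:ℤ) := by
      rw [hqdef, add_comm, Int.add_mul_emod_self_left]
      exact Int.emod_eq_of_lt (by positivity) (by exact_mod_cast hbM)
    have hpq : u * (q:ℝ) = p := by
      rw [hqdef, hpdef]
      push_cast
      rw [← huw]
      ring
    refine ⟨p, Set.Icc_subset_Icc hp1 hcase, ?_⟩
    have hnull := gap_null hM0 hAsub hbA hL hkn q hq
    rw [← hδdef] at hnull
    refine measure_mono_null (Set.inter_subset_inter_right _ ?_) hnull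
    refine Set.Icc_subset_Icc ?_ ?_
    · rw [show δ * (M:ℝ)^k * (q:ℝ) = u * (q:ℝ) from by rw [hudef], hpq]
    · rw [show δ * (M:ℝ)^k * ((q:ℝ)+1) = u * (q:ℝ) + u from by rw [hudef]; ring, hpq]
      linarith
  · -- use previous gap, containing x
    push_neg at hcase
    set q : ℤ := (M:ℤ) * (m₀ - 1) + b with hqdef
    have hq : q % (M:ℤ) = (b:ℤ) := by
      rw [hqdef, add_comm, Int.add_mul_emod_self_left]
      exact Int.emod_eq_of_lt (by positivity) (by exact_mod_cast hbM)
    have hpq : u * (q:ℝ) = p - w := by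
      rw [hqdef, hpdef]
      push_cast
      rw [← huw]
      ring
    have hgap2 : 2 * (ν * r) ≤ r - w + u := by
      have hMR0 : (0:ℝ) < (M:ℝ) := by linarith
      have g1 : u * (M:ℝ) ≤ r := by rw [huw]; exact hwr
      have e1 : (u * (M:ℝ)) * ((M:ℝ) - 1) ≤ r * ((M:ℝ) - 1) :=
        mul_le_mul_of_nonneg_right g1 (by linarith)
      have h4 : 0 ≤ (ν * r * (M:ℝ)) * ((M:ℝ) - 2) :=
        mul_nonneg (mul_nonneg (mul_nonneg hν.le hr0.le) hMR0.le) (by linarith)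
      have hgoalM : (2 * (ν * r)) * (M:ℝ) ≤ (r - w + u) * (M:ℝ) := by
        rw [← huw]
        nlinarith [e1, hνr2, h4]
      exact le_of_mul_le_mul_right hgoalM hMR0
    refine ⟨x, Set.Icc_subset_Icc le_rfl (by linarith), ?_⟩
    have hnull := gap_null hM0 hAsub hbA hL hkn q hq
    rw [← hδdef] at hnull
    refine measure_mono_null (Set.inter_subset_inter_right _ ?_) hnull
    refine Set.Icc_subset_Icc ?_ ?_
    · rw [show δ * (M:ℝ)^k * (q:ℝ) = u * (q:ℝ) from by rw [hudef], hpq]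
      linarith
    · rw [show δ * (M:ℝ)^k * ((q:ℝ)+1) = u * (q:ℝ) + u from by rw [hudef]; ring, hpq]
      linarith
end

section
/- (Weak subadditivity of the Cantor function) Let G_{n,M,A}(x) := |C_n(M,A)|^{-1} · |C_n(M,A) ∩ [0,x]| for x > 0 (and 0 for x ≤ 0) be the Cantor function of the n-iterate Cantor set based in [0,1], and let Ā := {0,1,...,|A|−1} be the canonical alphabet of the same cardinality. Then for any x ≤ y, G_{n,M,A}(y) − G_{n,M,A}(x) ≤ G_{n,M,Ā}(y − x). -/
open MeasureTheory
open scoped ENNReal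

/-- The Cantor function `G_{n,M,A}(x) = |C_n(M,A)|⁻¹ · |C_n(M,A) ∩ [0,x]|` of the `n`-iterate
Cantor set based in `[0,1]` (equal to `0` for `x ≤ 0`, since then `[0,x] ∩ C_n` is null). -/
noncomputable def cantorFun (M : ℕ) (A : Finset ℕ) (n : ℕ) (x : ℝ) : ℝ :=
  (volume (cantorIter 1 M A n ∩ Set.Icc 0 x)).toReal / ((A.card : ℝ) / (M : ℝ)) ^ n

/-!
Refine the grid: appending `j` free low digits writes `C_n(M, A)` as a union of cells
`[c h, (c + 1) h]` with `h = M^{-(n+j)}`, so up to two cells `|C_n(M, A) ∩ [x, y]|` is `h` times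
the number of digit strings in a window of `m ≈ (y - x) / h` consecutive integers. The
combinatorial core is a window comparison: if every window of length `m` of `S` has at most as
many points as the window `[0, m)` of `T`, the same holds after appending a low digit from `A` to
`S` and from `Ā = {0, …, |A| - 1}` to `T`. Indeed a window of length `m` meets each residue class
mod `M` in an interval of length `⌊m/M⌋` or `⌊m/M⌋ + 1`, the long ones numbering `m mod M`, and
`Ā` picks up the long classes of `[0, m)` first. Letting `h → 0` gives
`|C_n(M, A) ∩ [x, y]| ≤ |C_n(M, Ā) ∩ [0, y - x]|`, and splitting `[0, y]` at `x` gives the claim.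
-/

open scoped Finset

namespace CantorFun

variable {M : ℕ}

section Digits

open Finset

theorem sub_ceilDiv_eq (hM : 0 < M) {a : ℕ} (ha : a < M) (x : ℕ) :
    (x - a) ⌈/⌉ M = x / M + if a < x % M then 1 else 0 := by
  have hx := Nat.div_add_mod' x M
  have hr := Nat.mod_lt x hM
  rw [Nat.ceilDiv_eq_add_pred_div]
  generalize x / M = q at *
  generalize x % M = r at *
  split_ifs <;> apply Nat.div_eq_of_lt_le <;> simp only [add_mul, one_mul, add_zero] <;> omega

theorem sum_range_sub_ceilDiv (hM : 0 < M) (x : ℕ) : ∑ a ∈ range M, (x - a) ⌈/⌉ M = x := by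
  have hfilter : (range M).filter (· < x % M) = range (x % M) := by
    ext a; simp only [mem_filter, mem_range]; have := Nat.mod_lt x hM; omega
  rw [sum_congr rfl fun a ha => sub_ceilDiv_eq hM (mem_range.1 ha) x, sum_add_distrib,
    sum_boole, sum_const, card_range, smul_eq_mul, hfilter, card_range, Nat.cast_id,
    Nat.div_add_mod]

/-- For `a < M`, the number of `c ∈ [k, k + m)` with `c ≡ a [MOD M]`. -/
def residueCount (M k m a : ℕ) : ℕ :=
  (k + m - a) ⌈/⌉ M - (k - a) ⌈/⌉ M

theorem residueCount_mem_Icc (hM : 0 < M) {a : ℕ} (ha : a < M) (k m : ℕ) :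
    residueCount M k m a ∈ Set.Icc (m / M) (m / M + 1) := by
  have hk := Nat.div_add_mod k M
  have hm := Nat.div_add_mod m M
  have hkm := Nat.div_add_mod (k + m) M
  have := Nat.mod_lt k hM
  have := Nat.mod_lt m hM
  have := Nat.mod_lt (k + m) hM
  rw [residueCount, sub_ceilDiv_eq hM ha, sub_ceilDiv_eq hM ha, Set.mem_Icc]
  rw [Nat.add_div hM] at hkm ⊢
  generalize k / M = qk at *
  generalize m / M = qm at *
  generalize (k + m) % M = rkm at *
  generalize k % M = rk at *
  generalize m % M = rm at *
  split_ifs at * <;> simp only [mul_add, mul_one, add_zero] at hkm <;> omega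

theorem residueCount_zero_left (hM : 0 < M) {a : ℕ} (ha : a < M) (m : ℕ) :
    residueCount M 0 m a = m / M + if a < m % M then 1 else 0 := by
  rw [residueCount, zero_add, Nat.zero_sub, zero_ceilDiv, Nat.sub_zero, sub_ceilDiv_eq hM ha]

theorem sum_range_residueCount (hM : 0 < M) (k m : ℕ) :
    ∑ a ∈ range M, residueCount M k m a = m := by
  unfold residueCount
  rw [sum_tsub_distrib _ fun a _ => (gc_mul_ceilDiv hM).monotone_l (by omega),
    sum_range_sub_ceilDiv hM, sum_range_sub_ceilDiv hM, Nat.add_sub_cancel_left]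

theorem card_filter_div_lt_residueCount_le (hM : 0 < M) (k m : ℕ) :
    #{a ∈ range M | m / M < residueCount M k m a} ≤ m % M := by
  have hcount : M * (m / M) + #{a ∈ range M | m / M < residueCount M k m a} ≤ m := calc
    _ = ∑ a ∈ range M, (m / M + if m / M < residueCount M k m a then 1 else 0) := by
      rw [sum_add_distrib, sum_const, card_range, smul_eq_mul, sum_boole, Nat.cast_id]
    _ ≤ ∑ a ∈ range M, residueCount M k m a := sum_le_sum fun a ha => by
      obtain ⟨hlo, -⟩ := residueCount_mem_Icc hM (mem_range.1 ha) k m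
      split_ifs <;> omega
    _ = m := sum_range_residueCount hM k m
  have := Nat.div_add_mod m M
  omega

def appendDigit (M : ℕ) (A S : Finset ℕ) : Finset ℕ :=
  image₂ (fun a s => a + M * s) A S

theorem card_appendDigit_inter {A : Finset ℕ} (hA : A ⊆ range M) (S I : Finset ℕ) :
    #(appendDigit M A S ∩ I) = ∑ a ∈ A, #{s ∈ S | a + M * s ∈ I} := by
  have hlt : ∀ a ∈ A, a < M := fun a ha => mem_range.1 (hA ha)
  have hdecomp : appendDigit M A S ∩ I =
      A.biUnion fun a => {s ∈ S | a + M * s ∈ I}.image (a + M * ·) := by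
    ext c
    simp only [appendDigit, mem_inter, mem_image₂, mem_biUnion, mem_image, mem_filter]
    constructor
    · rintro ⟨⟨a, ha, s, hs, rfl⟩, hc⟩
      exact ⟨a, ha, s, ⟨hs, hc⟩, rfl⟩
    · rintro ⟨a, ha, s, ⟨hs, hc⟩, rfl⟩
      exact ⟨⟨a, ha, s, hs, rfl⟩, hc⟩
  rw [hdecomp, card_biUnion]
  · refine sum_congr rfl fun a ha => card_image_of_injective _ fun s t hst => ?_
    have hM : 0 < M := (Nat.zero_le a).trans_lt (hlt a ha)
    exact Nat.eq_of_mul_eq_mul_left hM (Nat.add_left_cancel hst)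
  · intro a ha a' ha' hne
    simp only [Function.onFun, disjoint_left, mem_image]
    rintro _ ⟨s, -, rfl⟩ ⟨s', -, hs'⟩
    apply hne
    have := congrArg (· % M) hs'
    simp only [Nat.add_mul_mod_self_left, Nat.mod_eq_of_lt (hlt a ha),
      Nat.mod_eq_of_lt (hlt a' ha')] at this
    exact this.symm

theorem filter_add_mul_mem_Ico (hM : 0 < M) (S : Finset ℕ) (a k m : ℕ) :
    {s ∈ S | a + M * s ∈ Ico k (k + m)} =
      S ∩ Ico ((k - a) ⌈/⌉ M) ((k - a) ⌈/⌉ M + residueCount M k m a) := by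
  have hle : (k - a) ⌈/⌉ M ≤ (k + m - a) ⌈/⌉ M := (gc_mul_ceilDiv hM).monotone_l (by omega)
  ext s
  simp only [mem_filter, mem_inter, mem_Ico, residueCount, Nat.add_sub_cancel' hle, ← not_le,
    ceilDiv_le_iff_le_mul hM]
  exact and_congr_right fun _ => by omega

def WindowDominated (S T : Finset ℕ) : Prop :=
  ∀ k m, #(S ∩ Ico k (k + m)) ≤ #(T ∩ range m)

theorem WindowDominated.card_appendDigit_inter_Ico_le {S T A : Finset ℕ}
    (hST : WindowDominated S T) (hM : 0 < M) (hA : A ⊆ range M) (k m : ℕ) :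
    #(appendDigit M A S ∩ Ico k (k + m)) ≤ ∑ a ∈ A, #(T ∩ range (residueCount M k m a)) := by
  rw [card_appendDigit_inter hA]
  exact sum_le_sum fun a _ => filter_add_mul_mem_Ico hM S a k m ▸ hST _ _

theorem card_appendDigit_range_inter_range (hM : 0 < M) {N : ℕ} (hN : N ≤ M) (T : Finset ℕ)
    (m : ℕ) : #(appendDigit M (range N) T ∩ range m) =
      ∑ a ∈ range N, #(T ∩ range (m / M + if a < m % M then 1 else 0)) := by
  rw [card_appendDigit_inter (range_subset_range.2 hN)]
  refine sum_congr rfl fun a ha => ?_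
  have ha : a < M := (mem_range.1 ha).trans_le hN
  rw [← residueCount_zero_left hM ha, ← zero_add m, range_eq_Ico, filter_add_mul_mem_Ico hM,
    Nat.zero_sub, zero_ceilDiv, zero_add, zero_add, ← range_eq_Ico]

theorem sum_le_sum_range_card_of_le_succ {g : ℕ → ℕ} (hg : Monotone g) {A : Finset ℕ}
    {ℓ : ℕ → ℕ} {q r : ℕ} (hℓ : ∀ a ∈ A, ℓ a ≤ q + 1) (hr : #{a ∈ A | q < ℓ a} ≤ r) :
    ∑ a ∈ A, g (ℓ a) ≤ ∑ a ∈ range #A, g (q + if a < r then 1 else 0) := by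
  set δ := g (q + 1) - g q
  have hδ : g (q + 1) = g q + δ := (Nat.add_sub_of_le (hg q.le_succ)).symm
  have hfilter : (range #A).filter (· < r) = range (min #A r) := by
    ext a; simp only [mem_filter, mem_range, lt_min_iff]
  calc ∑ a ∈ A, g (ℓ a)
      ≤ ∑ a ∈ A, (g q + if q < ℓ a then δ else 0) := sum_le_sum fun a ha => by
        split_ifs
        · rw [← hδ]; exact hg (hℓ a ha)
        · exact hg (by omega)
    _ = #A * g q + #{a ∈ A | q < ℓ a} * δ := by
      rw [sum_add_distrib, sum_const, ← sum_filter, sum_const, smul_eq_mul, smul_eq_mul]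
    _ ≤ #(range #A) * g q + #{a ∈ range #A | a < r} * δ := by
      rw [card_range, hfilter, card_range]
      gcongr
      exact le_min (card_filter_le _ _) hr
    _ = ∑ a ∈ range #A, (g q + if a < r then δ else 0) := by
      rw [sum_add_distrib, sum_const, ← sum_filter, sum_const, smul_eq_mul, smul_eq_mul]
    _ = ∑ a ∈ range #A, g (q + if a < r then 1 else 0) := sum_congr rfl fun a _ => by
      split_ifs
      · exact hδ.symm
      · rfl

theorem WindowDominated.appendDigit_range_card {S T A : Finset ℕ} (hST : WindowDominated S T)
    (hM : 0 < M) (hA : A ⊆ range M) :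
    WindowDominated (appendDigit M A S) (appendDigit M (range #A) T) := by
  intro k m
  have hAM : #A ≤ M := by simpa using card_le_card hA
  have hlong : #{a ∈ A | m / M < residueCount M k m a} ≤ m % M :=
    (card_le_card (filter_subset_filter _ hA)).trans (card_filter_div_lt_residueCount_le hM k m)
  calc #(appendDigit M A S ∩ Ico k (k + m))
      ≤ ∑ a ∈ A, #(T ∩ range (residueCount M k m a)) :=
        hST.card_appendDigit_inter_Ico_le hM hA k m
    _ ≤ ∑ a ∈ range #A, #(T ∩ range (m / M + if a < m % M then 1 else 0)) :=
        sum_le_sum_range_card_of_le_succ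
          (fun t t' h => card_le_card (inter_subset_inter_left (range_subset_range.2 h)))
          (fun a ha => (residueCount_mem_Icc hM (mem_range.1 (hA ha)) k m).2) hlong
    _ = #(appendDigit M (range #A) T ∩ range m) :=
        (card_appendDigit_range_inter_range hM hAM T m).symm

theorem windowDominated_zero : WindowDominated {0} {0} := by
  intro k m
  rcases Nat.eq_zero_or_pos m with rfl | hm
  · simp
  · calc #({0} ∩ Ico k (k + m)) ≤ #{0} := card_le_card inter_subset_left
      _ = #({0} ∩ range m) := by simp [hm]

theorem WindowDominated.appendDigit_iterate {S T A : Finset ℕ} (hST : WindowDominated S T)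
    (hM : 0 < M) (hA : A ⊆ range M) (n : ℕ) :
    WindowDominated ((appendDigit M A)^[n] S) ((appendDigit M (range #A))^[n] T) := by
  induction n with
  | zero => exact hST
  | succ n ih =>
    rw [Function.iterate_succ_apply', Function.iterate_succ_apply']
    exact ih.appendDigit_range_card hM hA

theorem sum_fin_succ_mul_pow (n : ℕ) (d : Fin (n + 1) → ℕ) :
    ∑ j, d j * M ^ (j : ℕ) = d 0 + M * ∑ j : Fin n, d j.succ * M ^ (j : ℕ) := by
  rw [Fin.sum_univ_succ, mul_sum]
  simp only [Fin.val_zero, pow_zero, mul_one, Fin.val_succ, pow_succ]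
  congr 1
  exact sum_congr rfl fun j _ => by ring

theorem discreteCantor_eq_iterate (A : Finset ℕ) (n : ℕ) :
    discreteCantor M A n = ((appendDigit M A)^[n] {0} : Finset ℕ) := by
  induction n with
  | zero => ext c; simp [discreteCantor]
  | succ n ih =>
    ext c
    rw [Function.iterate_succ_apply', mem_coe, appendDigit, mem_image₂]
    simp only [← mem_coe, ← ih, discreteCantor, Set.mem_ofPred_eq]
    constructor
    · rintro ⟨d, hd, rfl⟩
      exact ⟨d 0, hd 0, _, ⟨fun j => d j.succ, fun j => hd j.succ, rfl⟩,
        (sum_fin_succ_mul_pow n d).symm⟩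
    · rintro ⟨a, ha, _, ⟨d, hd, rfl⟩, rfl⟩
      refine ⟨Fin.cons a d, Fin.cases ha hd, ?_⟩
      simp [sum_fin_succ_mul_pow]

end Digits

section Grid

open Set

variable {h : ℝ}

def gridUnion (h : ℝ) (S : Finset ℕ) : Set ℝ :=
  ⋃ c ∈ S, Icc (c * h) ((c + 1) * h)

theorem cantorIter_one_eq_gridUnion (M : ℕ) (A : Finset ℕ) (n : ℕ) :
    cantorIter 1 M A n = gridUnion ((M : ℝ) ^ n)⁻¹ ((appendDigit M A)^[n] {0}) := by
  simp only [cantorIter, gridUnion, discreteCantor_eq_iterate, Finset.mem_coe, one_div,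
    mul_comm ((M : ℝ) ^ n)⁻¹]

theorem biUnion_range_Icc (hh : 0 ≤ h) (b : ℝ) (N : ℕ) :
    ⋃ a ∈ Finset.range (N + 1), Icc (((a : ℝ) + b) * h) ((a + b + 1) * h) =
      Icc (b * h) ((N + 1 + b) * h) := by
  induction N with
  | zero => simp [add_comm]
  | succ N ih =>
    rw [Finset.range_add_one, Finset.set_biUnion_insert, ih, union_comm]
    push_cast
    rw [Icc_union_Icc_eq_Icc (mul_le_mul_of_nonneg_right (by linarith) hh)
      (mul_le_mul_of_nonneg_right (by linarith) hh)]
    ring_nf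

theorem gridUnion_appendDigit_range (hM : 0 < M) (hh : 0 ≤ h) (S : Finset ℕ) :
    gridUnion h (appendDigit M (Finset.range M) S) = gridUnion (M * h) S := by
  obtain ⟨M, rfl⟩ : ∃ M', M = M' + 1 := ⟨M - 1, by omega⟩
  have hcell : ∀ s : ℕ, ⋃ a ∈ Finset.range (M + 1),
      Icc (((a + (M + 1) * s : ℕ) : ℝ) * h) (((a + (M + 1) * s : ℕ) + 1) * h) =
        Icc (s * ((M + 1 : ℕ) * h)) ((s + 1) * ((M + 1 : ℕ) * h)) := by
    intro s
    push_cast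
    rw [biUnion_range_Icc hh]
    congr 1 <;> ring
  ext z
  simp only [gridUnion, appendDigit, Finset.mem_image₂, mem_iUnion, exists_prop, ← hcell]
  constructor
  · rintro ⟨_, ⟨a, ha, s, hs, rfl⟩, hz⟩
    exact ⟨s, hs, a, ha, hz⟩
  · rintro ⟨s, hs, a, ha, hz⟩
    exact ⟨_, ⟨a, ha, s, hs, rfl⟩, hz⟩

theorem gridUnion_iterate_appendDigit_range (hM : 0 < M) (hh : 0 ≤ h) (j : ℕ)
    (S : Finset ℕ) :
    gridUnion h ((appendDigit M (Finset.range M))^[j] S) = gridUnion (M ^ j * h) S := by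
  induction j generalizing h with
  | zero => simp
  | succ j ih =>
    rw [Function.iterate_succ_apply', gridUnion_appendDigit_range hM hh,
      ih (by positivity), pow_succ, mul_assoc]

theorem volume_gridUnion_le (S : Finset ℕ) :
    volume (gridUnion h S) ≤ #S * ENNReal.ofReal h :=
  (measure_biUnion_finset_le _ _).trans (by simp [Real.volume_Icc, add_mul])

theorem volume_gridUnion_inter_Icc_le_card (hh : 0 < h) (S : Finset ℕ) (x y : ℝ) :
    volume (gridUnion h S ∩ Icc x y) ≤
      #(S ∩ Finset.Ico ⌊x / h⌋₊ ⌈y / h⌉₊) * ENNReal.ofReal h := by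
  have hsub : gridUnion h S ∩ Icc x y ⊆
      gridUnion h (S ∩ Finset.Ico ⌊x / h⌋₊ ⌈y / h⌉₊) ∪ {x, y} := by
    rintro z ⟨hz, hzx, hzy⟩
    obtain ⟨c, hc, hzc⟩ := mem_iUnion₂.1 hz
    by_cases hlow : c < ⌊x / h⌋₊
    · have : ((c + 1 : ℕ) : ℝ) ≤ x / h := (Nat.le_floor_iff' c.succ_ne_zero).1 hlow
      push_cast at this
      have := hzc.2.trans ((le_div_iff₀ hh).1 this)
      exact Or.inr (Or.inl (by linarith))
    by_cases hhigh : ⌈y / h⌉₊ ≤ c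
    · have := (div_le_iff₀ hh).1 (Nat.ceil_le.1 hhigh)
      exact Or.inr (Or.inr (mem_singleton_iff.2 (by linarith [hzc.1])))
    have hc' : c ∈ S ∩ Finset.Ico ⌊x / h⌋₊ ⌈y / h⌉₊ :=
      Finset.mem_inter.2 ⟨hc, Finset.mem_Ico.2 ⟨by omega, by omega⟩⟩
    exact Or.inl (mem_biUnion hc' hzc)
  calc volume (gridUnion h S ∩ Icc x y)
      ≤ volume (gridUnion h (S ∩ Finset.Ico ⌊x / h⌋₊ ⌈y / h⌉₊)) + volume ({x, y} : Set ℝ) :=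
        (measure_mono hsub).trans (measure_union_le _ _)
    _ ≤ #(S ∩ Finset.Ico ⌊x / h⌋₊ ⌈y / h⌉₊) * ENNReal.ofReal h := by
        rw [(toFinite {x, y}).measure_zero, add_zero]
        exact volume_gridUnion_le _

theorem card_inter_range_mul_le_volume_gridUnion (hh : 0 < h) (T : Finset ℕ) (m : ℕ) :
    #(T ∩ Finset.range m) * ENNReal.ofReal h ≤ volume (gridUnion h T ∩ Icc 0 (m * h)) := by
  have hdisj : Pairwise (Function.onFun Disjoint fun c : ℕ => Ico ((c : ℝ) * h) ((c + 1) * h)) := by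
    simpa [Order.succ_eq_add_one] using
      Monotone.pairwise_disjoint_on_Ico_succ (f := fun c : ℕ => (c : ℝ) * h)
        fun a b hab => mul_le_mul_of_nonneg_right (Nat.cast_le.2 hab) hh.le
  calc #(T ∩ Finset.range m) * ENNReal.ofReal h
      = ∑ c ∈ T ∩ Finset.range m, volume (Ico ((c : ℝ) * h) ((c + 1) * h)) := by
        simp [Real.volume_Ico, add_mul]
    _ = volume (⋃ c ∈ T ∩ Finset.range m, Ico ((c : ℝ) * h) ((c + 1) * h)) :=
        (measure_biUnion_finset (hdisj.set_pairwise _) fun _ _ => measurableSet_Ico).symm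
    _ ≤ volume (gridUnion h T ∩ Icc 0 (m * h)) := by
        refine measure_mono (iUnion₂_subset fun c hc => ?_)
        obtain ⟨hcT, hcm⟩ := Finset.mem_inter.1 hc
        have hcm : (c : ℝ) + 1 ≤ m := by exact_mod_cast Finset.mem_range.1 hcm
        refine fun z hz => ⟨mem_biUnion hcT (Ico_subset_Icc_self hz), ?_, ?_⟩
        · exact (by positivity : (0 : ℝ) ≤ c * h).trans hz.1
        · exact hz.2.le.trans (by gcongr)

theorem measure_inter_Icc_le_add {α : Type*} [LinearOrder α] [MeasurableSpace α]
    (μ : Measure α) (E : Set α) (a b c : α) :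
    μ (E ∩ Icc a c) ≤ μ (E ∩ Icc a b) + μ (E ∩ Icc b c) := by
  refine (measure_mono ?_).trans (measure_union_le _ _)
  rw [← inter_union_distrib_left]
  exact inter_subset_inter_right _ Icc_subset_Icc_union_Icc

theorem WindowDominated.volume_gridUnion_inter_Icc_le {S T : Finset ℕ}
    (hST : WindowDominated S T) (hh : 0 < h) {x y : ℝ} (hxy : x ≤ y) :
    volume (gridUnion h S ∩ Icc x y) ≤
      volume (gridUnion h T ∩ Icc 0 (y - x)) + ENNReal.ofReal (2 * h) := by
  set k := ⌊x / h⌋₊ with hk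
  set m := ⌈(y - x) / h⌉₊ + 1 with hm
  have hend : ⌈y / h⌉₊ ≤ k + m := by
    have := Nat.lt_floor_add_one (x / h)
    have := Nat.le_ceil ((y - x) / h)
    rw [Nat.ceil_le, hk, hm, sub_div] at *
    push_cast
    linarith
  have hmh : m * h - (y - x) ≤ 2 * h := by
    have := Nat.ceil_lt_add_one (div_nonneg (sub_nonneg.2 hxy) hh.le)
    have : (m : ℝ) ≤ (y - x) / h + 2 := by rw [hm]; push_cast; linarith
    calc (m : ℝ) * h - (y - x) ≤ ((y - x) / h + 2) * h - (y - x) := by gcongr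
      _ = 2 * h := by field_simp; ring
  calc volume (gridUnion h S ∩ Icc x y)
      ≤ #(S ∩ Finset.Ico k ⌈y / h⌉₊) * ENNReal.ofReal h :=
        volume_gridUnion_inter_Icc_le_card hh S x y
    _ ≤ #(S ∩ Finset.Ico k (k + m)) * ENNReal.ofReal h := by gcongr
    _ ≤ #(T ∩ Finset.range m) * ENNReal.ofReal h := mul_le_mul_left (by exact_mod_cast hST k m) _
    _ ≤ volume (gridUnion h T ∩ Icc 0 (m * h)) :=
        card_inter_range_mul_le_volume_gridUnion hh T m
    _ ≤ volume (gridUnion h T ∩ Icc 0 (y - x)) + volume (Icc (y - x) (m * h)) :=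
        (measure_inter_Icc_le_add _ _ _ _ _).trans (by gcongr; exact inter_subset_right)
    _ ≤ volume (gridUnion h T ∩ Icc 0 (y - x)) + ENNReal.ofReal (2 * h) := by
        rw [Real.volume_Icc]
        gcongr

theorem cantorIter_one_eq_gridUnion_refine (hM : 0 < M) (A : Finset ℕ) (n j : ℕ) :
    cantorIter 1 M A n = gridUnion ((M : ℝ) ^ (j + n))⁻¹
      ((appendDigit M (Finset.range M))^[j] ((appendDigit M A)^[n] {0})) := by
  rw [gridUnion_iterate_appendDigit_range hM (by positivity), cantorIter_one_eq_gridUnion, pow_add,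
    mul_inv, ← mul_assoc, mul_inv_cancel₀ (by positivity), one_mul]

theorem volume_cantorIter_inter_Icc_le (hM : 1 < M) {A : Finset ℕ} (hA : A ⊆ Finset.range M)
    (n : ℕ) {x y : ℝ} (hxy : x ≤ y) :
    volume (cantorIter 1 M A n ∩ Icc x y) ≤
      volume (cantorIter 1 M (Finset.range #A) n ∩ Icc 0 (y - x)) := by
  have hM0 : 0 < M := by omega
  refine ENNReal.le_of_forall_pos_le_add fun ε hε _ => ?_
  obtain ⟨j, hj⟩ : ∃ j : ℕ, ((M : ℝ)⁻¹) ^ j < ε / 2 :=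
    exists_pow_lt_of_lt_one (by positivity) (inv_lt_one_of_one_lt₀ (by exact_mod_cast hM))
  have hε' : 2 * ((M : ℝ) ^ (j + n))⁻¹ ≤ ε := by
    have : ((M : ℝ) ^ (j + n))⁻¹ ≤ ((M : ℝ)⁻¹) ^ j := by
      rw [← inv_pow]
      exact pow_le_pow_of_le_one (by positivity) (inv_le_one_of_one_le₀ (by exact_mod_cast hM.le))
        (by omega)
    linarith
  have hST := (windowDominated_zero.appendDigit_iterate hM0 hA n).appendDigit_iterate hM0
    subset_rfl j
  rw [Finset.card_range] at hST
  rw [cantorIter_one_eq_gridUnion_refine hM0 A n j,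
    cantorIter_one_eq_gridUnion_refine hM0 (Finset.range #A) n j]
  refine (hST.volume_gridUnion_inter_Icc_le (by positivity) hxy).trans (add_le_add_right ?_ _)
  exact ENNReal.ofReal_le_of_le_toReal (by rwa [ENNReal.coe_toReal])

end Grid

end CantorFun

open CantorFun in
theorem cantorFun_weak_subadditive_general (M : ℕ) (hM : 1 < M) (A : Finset ℕ)
    (hAsub : A ⊆ Finset.range M) (n : ℕ) :
    ∀ x y : ℝ, x ≤ y →
      cantorFun M A n y - cantorFun M A n x ≤ cantorFun M (Finset.range A.card) n (y - x) := by
  intro x y hxy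
  have hfinite : ∀ (B : Finset ℕ) (t : ℝ), volume (cantorIter 1 M B n ∩ Set.Icc 0 t) ≠ ⊤ :=
    fun B t => ne_top_of_le_ne_top measure_Icc_lt_top.ne (measure_mono Set.inter_subset_right)
  have hsplit : volume (cantorIter 1 M A n ∩ Set.Icc 0 y) ≤
      volume (cantorIter 1 M A n ∩ Set.Icc 0 x) +
        volume (cantorIter 1 M (Finset.range A.card) n ∩ Set.Icc 0 (y - x)) :=
    (measure_inter_Icc_le_add _ _ 0 x y).trans
      (add_le_add_right (volume_cantorIter_inter_Icc_le hM hAsub n hxy) _)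
  unfold cantorFun
  rw [Finset.card_range, div_sub_div_same]
  gcongr
  exact sub_le_iff_le_add'.2 (ENNReal.toReal_le_add hsplit (hfinite _ _) (hfinite _ _))

/-- Weak subadditivity of the Cantor function: with the canonical alphabet
`Ā = {0, 1, …, |A|-1}`, for any `x ≤ y` one has
`G_{n,M,A}(y) − G_{n,M,A}(x) ≤ G_{n,M,Ā}(y − x)`. -/
theorem cantorFun_weak_subadditive (M : ℕ) (hM : 1 < M) (A : Finset ℕ) (hA : A.Nonempty)
    (hAsub : A ⊆ Finset.range M) (hAprop : A ≠ Finset.range M) (n : ℕ) :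
    ∀ x y : ℝ, x ≤ y →
      cantorFun M A n y - cantorFun M A n x ≤ cantorFun M (Finset.range A.card) n (y - x) :=
  cantorFun_weak_subadditive_general M hM A hAsub n
end

section
/- The function κ_d(x) := (x^d / d!) · (1 − e^{−x} Σ_{j=0}^{d−1} x^j/j!)^{−1} defined for x > 0 satisfies lim_{x→0⁺} κ_d(x) = 1 and is strictly increasing on (0,∞). -/
open Filter

/-- `κ_d(x) = (x^d/d!) (1 − e^{−x} Σ_{j<d} x^j/j!)⁻¹`. -/
noncomputable def kappa (d : ℕ) (x : ℝ) : ℝ :=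
  x ^ d / (d.factorial : ℝ) *
    (1 - Real.exp (-x) * ∑ j ∈ Finset.range d, x ^ j / (j.factorial : ℝ))⁻¹

/-! Write `F_d(x) = 1 - e^{-x} Σ_{j<d} x^j/j!` for the Poisson tail. Then
`F_{n+1}' = e^{-x} x^n/n!` is `e^{-x}` times the derivative of `x^{n+1}/(n+1)!`, so L'Hôpital's
rule reduces the limit of `κ_{n+1}` at `0⁺` to `lim e^x = 1`. The numerator of the quotient rule
for `κ_{n+1}` is `(x^n/n!) (F_{n+1}(x) - e^{-x} x^{n+1}/(n+1)!) = (x^n/n!) F_{n+2}(x)`, and every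
Poisson tail is positive for `x > 0` because a partial sum of the exponential series lies below
`e^x`. -/

open Finset Real Nat Set

noncomputable def poissonTail (d : ℕ) (x : ℝ) : ℝ :=
  1 - exp (-x) * ∑ j ∈ range d, x ^ j / j !

lemma kappa_eq_div (d : ℕ) : kappa d = fun x => x ^ d / d ! / poissonTail d x := by
  ext x
  rw [kappa, poissonTail, div_eq_mul_inv (x ^ d / d !)]

lemma sum_range_pow_div_factorial_lt_exp {x : ℝ} (hx : 0 < x) (n : ℕ) :
    ∑ j ∈ range n, x ^ j / j ! < exp x :=
  calc ∑ j ∈ range n, x ^ j / j ! < ∑ j ∈ range (n + 1), x ^ j / j ! := by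
        rw [sum_range_succ]; exact lt_add_of_pos_right _ (by positivity)
    _ ≤ exp x := sum_le_exp_of_nonneg hx.le _

lemma poissonTail_pos (d : ℕ) {x : ℝ} (hx : 0 < x) : 0 < poissonTail d x := by
  rw [poissonTail, sub_pos, exp_neg, inv_mul_lt_iff₀ (exp_pos x), mul_one]
  exact sum_range_pow_div_factorial_lt_exp hx d

lemma poissonTail_succ_zero (n : ℕ) : poissonTail (n + 1) 0 = 0 := by
  simp [poissonTail, sum_range_succ']

lemma poissonTail_succ (d : ℕ) (x : ℝ) :
    poissonTail (d + 1) x = poissonTail d x - exp (-x) * (x ^ d / d !) := by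
  rw [poissonTail, poissonTail, sum_range_succ]
  ring

lemma hasDerivAt_pow_succ_div_factorial (n : ℕ) (x : ℝ) :
    HasDerivAt (fun x : ℝ => x ^ (n + 1) / (n + 1) !) (x ^ n / n !) x := by
  refine ((hasDerivAt_pow (n + 1) x).div_const ((n + 1) ! : ℝ)).congr_deriv ?_
  rw [factorial_succ]
  push_cast
  field_simp

lemma hasDerivAt_sum_range_succ_pow_div_factorial (n : ℕ) (x : ℝ) :
    HasDerivAt (fun x : ℝ => ∑ j ∈ range (n + 1), x ^ j / j !) (∑ j ∈ range n, x ^ j / j !) x := by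
  simp_rw [sum_range_succ' _ n]
  simpa using HasDerivAt.fun_sum fun j _ => hasDerivAt_pow_succ_div_factorial j x

lemma hasDerivAt_poissonTail_succ (n : ℕ) (x : ℝ) :
    HasDerivAt (poissonTail (n + 1)) (exp (-x) * (x ^ n / n !)) x := by
  have hexp : HasDerivAt (fun x : ℝ => exp (-x)) (-exp (-x)) x := by
    simpa using (hasDerivAt_neg x).exp
  refine ((hexp.mul (hasDerivAt_sum_range_succ_pow_div_factorial n x)).const_sub 1).congr_deriv ?_
  rw [sum_range_succ]
  ring

lemma tendsto_kappa_succ_nhdsGT_zero (n : ℕ) :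
    Tendsto (kappa (n + 1)) (nhdsWithin 0 (Ioi 0)) (nhds 1) := by
  have hf : Tendsto (fun x : ℝ => x ^ (n + 1) / (n + 1) !) (nhdsWithin 0 (Ioi 0)) (nhds 0) := by
    apply tendsto_nhdsWithin_of_tendsto_nhds
    simpa using ((continuous_pow (n + 1)).div_const ((n + 1) ! : ℝ)).tendsto 0
  have hg : Tendsto (poissonTail (n + 1)) (nhdsWithin 0 (Ioi 0)) (nhds 0) := by
    apply tendsto_nhdsWithin_of_tendsto_nhds
    have hcont : Continuous (poissonTail (n + 1)) :=
      continuous_iff_continuousAt.2 fun x => (hasDerivAt_poissonTail_succ n x).continuousAt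
    simpa [poissonTail_succ_zero] using hcont.tendsto 0
  have hratio : Tendsto (fun x => x ^ n / n ! / (exp (-x) * (x ^ n / n !)))
      (nhdsWithin 0 (Ioi 0)) (nhds 1) := by
    have hexp : Tendsto exp (nhdsWithin 0 (Ioi 0)) (nhds 1) :=
      tendsto_nhdsWithin_of_tendsto_nhds (by simpa using continuous_exp.tendsto 0)
    refine hexp.congr' ?_
    filter_upwards [self_mem_nhdsWithin] with x (hx : 0 < x)
    have : x ^ n / n ! ≠ 0 := by positivity
    rw [exp_neg]
    field_simp
  rw [kappa_eq_div]
  refine HasDerivAt.lhopital_zero_nhdsGT (.of_forall fun x => hasDerivAt_pow_succ_div_factorial n x)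
    (.of_forall fun x => hasDerivAt_poissonTail_succ n x) ?_ hf hg hratio
  filter_upwards [self_mem_nhdsWithin] with x (hx : 0 < x)
  positivity

lemma strictMonoOn_kappa_succ (n : ℕ) : StrictMonoOn (kappa (n + 1)) (Ioi 0) := by
  have hderiv : ∀ x ∈ Ioi (0 : ℝ), HasDerivAt (kappa (n + 1))
      (x ^ n / n ! * poissonTail (n + 2) x / poissonTail (n + 1) x ^ 2) x := by
    intro x (hx : 0 < x)
    rw [kappa_eq_div]
    refine ((hasDerivAt_pow_succ_div_factorial n x).div (hasDerivAt_poissonTail_succ n x)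
      (poissonTail_pos _ hx).ne').congr_deriv ?_
    rw [poissonTail_succ (n + 1), factorial_succ]
    push_cast
    ring
  refine strictMonoOn_of_deriv_pos (convex_Ioi 0)
    (fun x hx => (hderiv x hx).continuousAt.continuousWithinAt) fun x hx => ?_
  rw [interior_Ioi] at hx
  rw [(hderiv x hx).deriv]
  have := poissonTail_pos (n + 1) hx
  have := poissonTail_pos (n + 2) hx
  have : (0 : ℝ) < x := hx
  positivity

/-- For `d ≥ 1`, `κ_d(x) → 1` as `x → 0⁺` and `κ_d` is strictly increasing on `(0, ∞)`. -/
theorem kappa_tendsto_one_and_strictMono (d : ℕ) (hd : 1 ≤ d) :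
    Tendsto (kappa d) (nhdsWithin 0 (Set.Ioi 0)) (nhds 1) ∧
      StrictMonoOn (kappa d) (Set.Ioi 0) := by
  obtain ⟨n, rfl⟩ := Nat.exists_eq_add_of_le' hd
  exact ⟨tendsto_kappa_succ_nhdsGT_zero n, strictMonoOn_kappa_succ n⟩
end
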